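/- For every δ > 0 and M > 0 there exist an interaction matrix P (3×3 cyclic with weight γ ∈ (0,1)) and shock conjectures ε^{(1)}, ε^{(2)}, ε^{(3)} ∈ ℝ³ with ‖ε^{(i)} - ε^{(j)}‖₂ ≤ δ for all i,j, such that the game-to-real gap J_i(u°) - J_i(u^{(i)}) > M for every player i. -/

import Mathlib

open Matrix

/-- Cost of player `i` in a scalar-action quadratic network game on `Fin 3`. -/
noncomputable def J3 (P : Matrix (Fin 3) (Fin 3) ℝ) (ε : Fin 3 → ℝ) (i : Fin 3)
    (u : Fin 3 → ℝ) : ℝ :=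
  (1 / 2) * u i ^ 2 - u i * (P.mulVec u i + ε i)

/-- Euclidean norm of a real vector. -/
noncomputable def euclNorm {a : Type*} [Fintype a] (x : a → ℝ) : ℝ :=
  Real.sqrt (∑ k, x k ^ 2)

/-!
Player `i` plays the `i`-th coordinate of its own predicted equilibrium, so its own action is the
same in `u°` and in `u⁽ⁱ⁾` and its gap is `u⁽ⁱ⁾ᵢ · (P (u⁽ⁱ⁾ - u°))ᵢ`; for the cyclic matrix this
is `γ · u⁽ⁱ⁾ᵢ · (u⁽ⁱ⁾ᵢ₋₁ - u⁽ⁱ⁻¹⁾ᵢ₋₁)`, its own action times its error in predicting its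
neighbour. Prescribe the predicted equilibria instead of the conjectures, `ε⁽ⁱ⁾ = (I - P) x⁽ⁱ⁾`,
with `x⁽ⁱ⁾ = -c·𝟙 - s·e_{i-1}`. The prediction errors are `-s` and the conjectures differ by
`O(s)`, but the own actions are `-c`, so the gap `γ c s` is unbounded as `c → ∞`.
-/

lemma J3_sub_J3_of_apply_eq (P : Matrix (Fin 3) (Fin 3) ℝ) (ε : Fin 3 → ℝ) {i : Fin 3}
    {u v : Fin 3 → ℝ} (h : u i = v i) :
    J3 P ε i u - J3 P ε i v = v i * (P *ᵥ (v - u)) i := by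
  simp only [J3, mulVec_sub, Pi.sub_apply, h]
  ring

lemma euclNorm_le_sqrt_card_mul_sq {a : Type*} [Fintype a] {x : a → ℝ} {b : ℝ}
    (hb : ∀ k, |x k| ≤ b) : euclNorm x ≤ √(Fintype.card a * b ^ 2) := by
  refine Real.sqrt_le_sqrt ?_
  simpa using Finset.sum_le_card_nsmul Finset.univ _ _
    fun k _ => sq_le_sq.mpr ((hb k).trans (le_abs_self b))

def cyclicInteraction (γ : ℝ) : Matrix (Fin 3) (Fin 3) ℝ :=
  !![0, 0, γ; γ, 0, 0; 0, γ, 0]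

section cyclicInteraction

variable {γ : ℝ}

lemma cyclicInteraction_mulVec_apply (w : Fin 3 → ℝ) (i : Fin 3) :
    (cyclicInteraction γ *ᵥ w) i = γ * w (i - 1) := by
  fin_cases i <;> simp [cyclicInteraction, mulVec, dotProduct, Fin.sum_univ_three,
    show (0 : Fin 3) - 1 = 2 from rfl]

lemma det_one_sub_cyclicInteraction : (1 - cyclicInteraction γ).det = 1 - γ ^ 3 := by
  simp only [cyclicInteraction, det_fin_three, Fin.isValue, Matrix.sub_apply, one_apply,
    ↓reduceIte, of_apply, cons_val', cons_val_zero, cons_val_fin_one, sub_zero, cons_val_one,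
    mul_one, cons_val, Fin.reduceEq, sub_self, mul_zero, zero_sub, mul_neg, zero_mul, neg_zero,
    zero_ne_one, one_ne_zero, add_zero, neg_mul, neg_neg]
  ring

lemma abs_one_sub_cyclicInteraction_mulVec_apply_le {w : Fin 3 → ℝ} {s : ℝ}
    (hw : ∀ k, |w k| ≤ s) (k : Fin 3) :
    |((1 - cyclicInteraction γ) *ᵥ w) k| ≤ (1 + |γ|) * s := by
  rw [sub_mulVec, one_mulVec, Pi.sub_apply, cyclicInteraction_mulVec_apply]
  calc |w k - γ * w (k - 1)| ≤ |w k| + |γ| * |w (k - 1)| := by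
        rw [← abs_mul]; exact abs_sub _ _
    _ ≤ s + |γ| * s := by gcongr <;> exact hw _
    _ = (1 + |γ|) * s := by ring

lemma gap_cyclicInteraction_eq (hγ : γ ^ 3 ≠ 1) (x : Fin 3 → Fin 3 → ℝ)
    (i : Fin 3) :
    let A := 1 - cyclicInteraction γ
    J3 (cyclicInteraction γ) (A *ᵥ x i) i (fun k => (A⁻¹ *ᵥ (A *ᵥ x k)) k)
        - J3 (cyclicInteraction γ) (A *ᵥ x i) i (A⁻¹ *ᵥ (A *ᵥ x i))
      = γ * x i i * (x i (i - 1) - x (i - 1) (i - 1)) := by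
  intro A
  have hA : IsUnit A.det := by
    rw [isUnit_iff_ne_zero, det_one_sub_cyclicInteraction, sub_ne_zero]
    exact hγ.symm
  have hsolve : ∀ j, A⁻¹ *ᵥ (A *ᵥ x j) = x j := fun j => by
    rw [mulVec_mulVec, nonsing_inv_mul A hA, one_mulVec]
  simp only [hsolve]
  rw [J3_sub_J3_of_apply_eq _ _ (u := fun k => x k k) (v := x i) rfl,
    cyclicInteraction_mulVec_apply, Pi.sub_apply]
  ring

end cyclicInteraction

def predictedProfile (c s : ℝ) (i : Fin 3) : Fin 3 → ℝ :=
  fun k => if k = i - 1 then -c - s else -c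

section predictedProfile

variable {c s : ℝ}

lemma predictedProfile_self (i : Fin 3) : predictedProfile c s i i = -c :=
  if_neg fun h => one_ne_zero (sub_eq_self.mp h.symm)

lemma predictedProfile_pred_sub (i : Fin 3) :
    predictedProfile c s i (i - 1) - predictedProfile c s (i - 1) (i - 1) = -s := by
  rw [predictedProfile_self, predictedProfile, if_pos rfl]
  ring

lemma abs_predictedProfile_sub_apply_le (hs : 0 ≤ s) (i j k : Fin 3) :
    |(predictedProfile c s i - predictedProfile c s j) k| ≤ s := by
  simp only [predictedProfile, Pi.sub_apply]
  split_ifs <;> ring_nf <;> simp [abs_of_nonneg hs, hs]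

lemma euclNorm_sub_of_predictedProfile_le {γ : ℝ} (hs : 0 ≤ s) (i j : Fin 3) :
    euclNorm ((1 - cyclicInteraction γ) *ᵥ predictedProfile c s i
        - (1 - cyclicInteraction γ) *ᵥ predictedProfile c s j)
      ≤ √(3 * ((1 + |γ|) * s) ^ 2) := by
  rw [← mulVec_sub]
  simpa using euclNorm_le_sqrt_card_mul_sq
    (abs_one_sub_cyclicInteraction_mulVec_apply_le (abs_predictedProfile_sub_apply_le hs i j))

end predictedProfile

theorem unbounded_gap_from_shock_general (δ M : ℝ) (hδ : 0 < δ) :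
    ∃ γ ∈ Set.Ioo (0 : ℝ) 1, ∃ ε : Fin 3 → Fin 3 → ℝ,
      (∀ i j : Fin 3, euclNorm (ε i - ε j) ≤ δ) ∧
      ∀ i : Fin 3,
        M < J3 !![0, 0, γ; γ, 0, 0; 0, γ, 0] (ε i) i
              (fun x => ((1 - !![0, 0, γ; γ, 0, 0; 0, γ, 0])⁻¹.mulVec (ε x)) x)
            - J3 !![0, 0, γ; γ, 0, 0; 0, γ, 0] (ε i) i
              ((1 - !![0, 0, γ; γ, 0, 0; 0, γ, 0])⁻¹.mulVec (ε i)) := by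
  refine ⟨1 / 2, ⟨by norm_num, by norm_num⟩,
    fun i => (1 - cyclicInteraction (1 / 2)) *ᵥ predictedProfile (6 * M / δ + 1) (δ / 3) i,
    fun i j => ?_, fun i => ?_⟩
  · refine (euclNorm_sub_of_predictedProfile_le (by positivity) i j).trans
      (Real.sqrt_le_iff.mpr ⟨hδ.le, ?_⟩)
    rw [abs_of_pos one_half_pos]
    nlinarith [sq_nonneg δ]
  · refine lt_of_lt_of_eq ?_ (gap_cyclicInteraction_eq (by norm_num) _ i).symm
    rw [predictedProfile_self, predictedProfile_pred_sub]
    have hcs : (6 * M / δ + 1) * (δ / 3) = 2 * M + δ / 3 := by field_simp; ring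
    nlinarith

/-- for every `δ > 0` and `M > 0` there are a 3×3 cyclic interaction
matrix with weight `γ ∈ (0,1)` and shock conjectures `ε⁽¹⁾, ε⁽²⁾, ε⁽³⁾` with
`‖ε⁽ⁱ⁾ - ε⁽ʲ⁾‖₂ ≤ δ` for all `i,j`, whose game-to-real gap exceeds `M` for every
player. Here `u⁽ⁱ⁾ = (I-P)⁻¹ ε⁽ⁱ⁾` and `u°ᵢ = u⁽ⁱ⁾ᵢ`. -/
theorem unbounded_gap_from_shock (δ M : ℝ) (hδ : 0 < δ) (hM : 0 < M) :
    ∃ γ ∈ Set.Ioo (0 : ℝ) 1, ∃ ε : Fin 3 → Fin 3 → ℝ,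
      (∀ i j : Fin 3, euclNorm (ε i - ε j) ≤ δ) ∧
      ∀ i : Fin 3,
        M < J3 !![0, 0, γ; γ, 0, 0; 0, γ, 0] (ε i) i
              (fun x => ((1 - !![0, 0, γ; γ, 0, 0; 0, γ, 0])⁻¹.mulVec (ε x)) x)
            - J3 !![0, 0, γ; γ, 0, 0; 0, γ, 0] (ε i) i
              ((1 - !![0, 0, γ; γ, 0, 0; 0, γ, 0])⁻¹.mulVec (ε i)) :=
  unbounded_gap_from_shock_general δ M hδ
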